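/- arXiv:1706.07364 — 4 statements merged into one kernel-verified Lean document; each statement's English description precedes it below -/
import Mathlib

section
/- Let F : [0,∞) → [0,∞) be an increasing function with F(x)/x → ∞ as x → ∞. Then the series M_F(z) = Σ_{n=1}^∞ (z^n / n²) e^{−F*(n)} converges absolutely for every z ∈ ℂ, defines an entire function of z, and satisfies |M_F(z)| ≤ (π²/6) · e^{F(log₊ |z|)} for all z ∈ ℂ. -/
/-- The Legendre transform `F*(y) = sup_{x ≥ 0} (x·y − F(x))`. -/
noncomputable def Fstar (F : ℝ → ℝ) (y : ℝ) : ℝ :=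
  sSup {v : ℝ | ∃ x : ℝ, 0 ≤ x ∧ v = x * y - F x}

/-- `M_F(z) = Σ_{n ≥ 1} (zⁿ/n²)·e^{−F*(n)}`. -/
noncomputable def MF (F : ℝ → ℝ) (z : ℂ) : ℂ :=
  ∑' n : ℕ, z ^ (n + 1) / ((n : ℂ) + 1) ^ 2 * (Real.exp (-(Fstar F ((n : ℝ) + 1))) : ℂ)

/-!
By Young's inequality for the Legendre transform, `n t - F t ≤ F*(n)` for every `t ≥ 0`; taking
`t = log⁺ r` gives `rⁿ e^{-F*(n)} ≤ e^{F(log⁺ r)}` for all `n`. The superlinear growth of `F` makes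
`F*` finite. Hence on the disc `|z| ≤ r` the terms of `M_F` are dominated by
`e^{F(log⁺ r)} / n²`, whose sum is `(π²/6) e^{F(log⁺ r)}`: this gives absolute convergence, the
bound, and (by Weierstrass) holomorphy.
-/

open Real Filter

variable {F : ℝ → ℝ}

lemma bddAbove_legendre (hF_nonneg : ∀ x : ℝ, 0 ≤ x → 0 ≤ F x)
    (hF_grow : Tendsto (fun x : ℝ => F x / x) atTop atTop) (y : ℝ) :
    BddAbove {v : ℝ | ∃ x : ℝ, 0 ≤ x ∧ v = x * y - F x} := by
  obtain ⟨X, hX⟩ := eventually_atTop.mp (hF_grow.eventually_ge_atTop y)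
  refine ⟨max 0 (max X 1 * |y|), ?_⟩
  rintro v ⟨x, hx, rfl⟩
  rcases le_or_gt x (max X 1) with hxX | hXx
  · have : x * y ≤ max X 1 * |y| :=
      (mul_le_mul_of_nonneg_left (le_abs_self y) hx).trans (by gcongr)
    linarith [hF_nonneg x hx, le_max_right 0 (max X 1 * |y|)]
  · have hx_pos : 0 < x := (lt_of_lt_of_le one_pos (le_max_right X 1)).trans hXx
    have : y ≤ F x / x := hX x ((le_max_left X 1).trans hXx.le)
    rw [le_div_iff₀ hx_pos] at this
    linarith [le_max_left 0 (max X 1 * |y|)]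

lemma mul_sub_le_Fstar (hF_nonneg : ∀ x : ℝ, 0 ≤ x → 0 ≤ F x)
    (hF_grow : Tendsto (fun x : ℝ => F x / x) atTop atTop) {t : ℝ} (ht : 0 ≤ t) (y : ℝ) :
    t * y - F t ≤ Fstar F y :=
  le_csSup (bddAbove_legendre hF_nonneg hF_grow y) ⟨t, ht, rfl⟩

lemma pow_mul_exp_neg_Fstar_le (hF_nonneg : ∀ x : ℝ, 0 ≤ x → 0 ≤ F x)
    (hF_grow : Tendsto (fun x : ℝ => F x / x) atTop atTop) {r t : ℝ} (hr : 0 ≤ r)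
    (ht : 0 ≤ t) (hrt : r ≤ exp t) (n : ℕ) :
    r ^ n * exp (-Fstar F n) ≤ exp (F t) :=
  calc r ^ n * exp (-Fstar F n)
      ≤ exp t ^ n * exp (F t - t * n) := by
        gcongr
        linarith [mul_sub_le_Fstar hF_nonneg hF_grow ht n]
    _ = exp (F t) := by rw [← exp_nat_mul, ← exp_add]; ring_nf

lemma le_exp_posLog (r : ℝ) : r ≤ exp (log⁺ r) :=
  (le_exp_log r).trans (exp_le_exp.mpr (le_max_right _ _))

noncomputable def MFTerm (F : ℝ → ℝ) (n : ℕ) (z : ℂ) : ℂ :=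
  z ^ (n + 1) / ((n : ℂ) + 1) ^ 2 * (Real.exp (-(Fstar F ((n : ℝ) + 1))) : ℂ)

lemma norm_MFTerm (n : ℕ) (z : ℂ) :
    ‖MFTerm F n z‖ = ‖z‖ ^ (n + 1) * exp (-Fstar F ((n + 1 : ℕ) : ℝ)) / ((n : ℝ) + 1) ^ 2 := by
  have : ‖(n : ℂ) + 1‖ = (n : ℝ) + 1 := by exact_mod_cast Complex.norm_natCast (n + 1)
  rw [MFTerm, norm_mul, norm_div, norm_pow, norm_pow, this, Complex.norm_real,
    norm_of_nonneg (exp_pos _).le]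
  push_cast
  ring

lemma norm_MFTerm_le (hF_nonneg : ∀ x : ℝ, 0 ≤ x → 0 ≤ F x)
    (hF_grow : Tendsto (fun x : ℝ => F x / x) atTop atTop) {z : ℂ} {r : ℝ} (hzr : ‖z‖ ≤ r)
    (n : ℕ) :
    ‖MFTerm F n z‖ ≤ exp (F (log⁺ r)) / ((n : ℝ) + 1) ^ 2 := by
  rw [norm_MFTerm]
  gcongr
  exact pow_mul_exp_neg_Fstar_le hF_nonneg hF_grow (norm_nonneg z) posLog_nonneg
    (hzr.trans (le_exp_posLog r)) (n + 1)

lemma hasSum_div_succ_sq (c : ℝ) :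
    HasSum (fun n : ℕ => c / ((n : ℝ) + 1) ^ 2) (c * (π ^ 2 / 6)) := by
  have := ((hasSum_nat_add_iff' 1).mpr hasSum_zeta_two).mul_left c
  simpa [div_eq_mul_inv] using this

lemma summable_norm_MFTerm (hF_nonneg : ∀ x : ℝ, 0 ≤ x → 0 ≤ F x)
    (hF_grow : Tendsto (fun x : ℝ => F x / x) atTop atTop) (z : ℂ) :
    Summable (fun n => ‖MFTerm F n z‖) :=
  (hasSum_div_succ_sq _).summable.of_nonneg_of_le (fun _ => norm_nonneg _)
    (norm_MFTerm_le hF_nonneg hF_grow le_rfl)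

lemma differentiable_MF (hF_nonneg : ∀ x : ℝ, 0 ≤ x → 0 ≤ F x)
    (hF_grow : Tendsto (fun x : ℝ => F x / x) atTop atTop) :
    Differentiable ℂ (MF F) := by
  intro z₀
  have hz₀ : z₀ ∈ Metric.ball (0 : ℂ) (‖z₀‖ + 1) := by simp
  have hMF : DifferentiableOn ℂ (MF F) (Metric.ball 0 (‖z₀‖ + 1)) := by
    refine Complex.differentiableOn_tsum_of_summable_norm (F := MFTerm F)
      (hasSum_div_succ_sq _).summable (fun n => ?_) Metric.isOpen_ball
      (fun n w hw => norm_MFTerm_le hF_nonneg hF_grow (mem_ball_zero_iff.mp hw).le n)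
    exact (((differentiable_pow _).div_const _).mul_const _).differentiableOn
  exact hMF.differentiableAt (Metric.isOpen_ball.mem_nhds hz₀)

lemma norm_MF_le (hF_nonneg : ∀ x : ℝ, 0 ≤ x → 0 ≤ F x)
    (hF_grow : Tendsto (fun x : ℝ => F x / x) atTop atTop) (z : ℂ) :
    ‖MF F z‖ ≤ π ^ 2 / 6 * exp (F (log⁺ ‖z‖)) :=
  calc ‖MF F z‖ ≤ ∑' n, ‖MFTerm F n z‖ :=
        norm_tsum_le_tsum_norm (summable_norm_MFTerm hF_nonneg hF_grow z)
    _ ≤ exp (F (log⁺ ‖z‖)) * (π ^ 2 / 6) :=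
        hasSum_le (norm_MFTerm_le hF_nonneg hF_grow le_rfl)
          (summable_norm_MFTerm hF_nonneg hF_grow z).hasSum (hasSum_div_succ_sq _)
    _ = π ^ 2 / 6 * exp (F (log⁺ ‖z‖)) := mul_comm _ _

theorem MF_entire_and_bounded_general (F : ℝ → ℝ)
    (hF_nonneg : ∀ x : ℝ, 0 ≤ x → 0 ≤ F x)
    (hF_grow : Filter.Tendsto (fun x : ℝ => F x / x) Filter.atTop Filter.atTop) :
    (∀ z : ℂ, Summable (fun n : ℕ =>
      ‖z ^ (n + 1) / ((n : ℂ) + 1) ^ 2 *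
        (Real.exp (-(Fstar F ((n : ℝ) + 1))) : ℂ)‖)) ∧
    Differentiable ℂ (MF F) ∧
    ∀ z : ℂ, ‖MF F z‖ ≤
      Real.pi ^ 2 / 6 * Real.exp (F (max 0 (Real.log ‖z‖))) :=
  ⟨summable_norm_MFTerm hF_nonneg hF_grow, differentiable_MF hF_nonneg hF_grow,
    norm_MF_le hF_nonneg hF_grow⟩

/-- For an increasing `F : [0,∞) → [0,∞)` with `F(x)/x → ∞`, the series `M_F(z)`
converges absolutely for every `z ∈ ℂ`, defines an entire function, and satisfies
`|M_F(z)| ≤ (π²/6)·e^{F(log₊ |z|)}`. -/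
theorem MF_entire_and_bounded (F : ℝ → ℝ)
    (hF_mono : MonotoneOn F (Set.Ici 0))
    (hF_nonneg : ∀ x : ℝ, 0 ≤ x → 0 ≤ F x)
    (hF_grow : Filter.Tendsto (fun x : ℝ => F x / x) Filter.atTop Filter.atTop) :
    (∀ z : ℂ, Summable (fun n : ℕ =>
      ‖z ^ (n + 1) / ((n : ℂ) + 1) ^ 2 *
        (Real.exp (-(Fstar F ((n : ℝ) + 1))) : ℂ)‖)) ∧
    Differentiable ℂ (MF F) ∧
    ∀ z : ℂ, ‖MF F z‖ ≤
      Real.pi ^ 2 / 6 * Real.exp (F (max 0 (Real.log ‖z‖))) :=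
  MF_entire_and_bounded_general F hF_nonneg hF_grow
end

section
/- For every sufficiently large real x there exists a real number m ≥ 2 such that simultaneously π(m) ≥ (log x)/(log log x) + 2 and θ(m) ≤ log x, where π(m) = Σ_{p ≤ m} 1 is the prime counting function and θ(m) = Σ_{p ≤ m} log p is the Chebyshev theta function (both sums over primes p). -/
/-!
Write `p_k = nth Nat.Prime k`, so that `π(p_K) = K + 1` and `θ(p_K) = ∑_{k ≤ K} log p_k`.
Chebyshev's bound `ψ(n) ≥ n log 2 - log (n + 1)` gives `p_k log 2 ≤ (k + 3) log p_k`, which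
inverts to `p_k ≤ 2 t log t` with `t = k + 3` for large `k`. Comparing `∑ log (k + 3)` with
`∫ log` then gives `θ(p_K) ≤ B + s (log s + log log s - (1 - log 2))` with `s = K + 4`: since
`2 < e`, the factor `2` costs less than the `-s` of Stirling's formula gains.
With `y = log x`, `K = ⌈y / log y⌉₊ + 1` and `m = p_K` we get `s ≤ y / log y + 6`, hence
`s (log s + log log s) ≤ y + O(log y)`, and the saving `(1 - log 2) y / log y` absorbs the error.
-/

open Filter Finset Real Chebyshev
open Nat (nth primesBelow primesLE primeCounting prime_nth_prime)

theorem sum_primesBelow_nth_prime {M : Type*} [AddCommMonoid M] (f : ℕ → M) (K : ℕ) :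
    ∑ p ∈ primesBelow (nth Nat.Prime K), f p = ∑ k ∈ range K, f (nth Nat.Prime k) := by
  induction K with
  | zero => simp [Nat.nth_prime_zero_eq_two]
  | succ K ih =>
    rw [primesBelow, Nat.filter_range_nth_eq_insert_of_infinite Nat.infinite_setOfPred_prime,
      sum_insert (by simp)]
    simp only [primesBelow] at ih
    simp only [ih, sum_range_succ, add_comm]

theorem sum_primesLE_nth_prime {M : Type*} [AddCommMonoid M] (f : ℕ → M) (K : ℕ) :
    ∑ p ∈ primesLE (nth Nat.Prime K), f p = ∑ k ∈ range (K + 1), f (nth Nat.Prime k) := by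
  rw [primesLE, Nat.primesBelow_succ, if_pos (prime_nth_prime K),
    sum_insert (Nat.notMem_primesBelow _), sum_primesBelow_nth_prime, sum_range_succ, add_comm]

theorem primeCounting_nth_prime (K : ℕ) : primeCounting (nth Nat.Prime K) = K + 1 := by
  rw [← Nat.primesLE_card_eq_primeCounting, card_eq_sum_ones, sum_primesLE_nth_prime]
  simp

theorem nth_prime_mul_log_two_le (k : ℕ) :
    (nth Nat.Prime k : ℝ) * log 2 ≤ (k + 3) * log (nth Nat.Prime k) := by
  set p := nth Nat.Prime k
  have hp : (2 : ℝ) ≤ p := mod_cast (prime_nth_prime k).two_le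
  have hlog : log (p + 1) ≤ 2 * log p := by
    calc log (p + 1) ≤ log (p ^ 2) := log_le_log (by positivity) (by nlinarith)
      _ = 2 * log p := by rw [log_pow]; norm_num
  have := (psi_ge p).trans (psi_le_primeCounting_mul_log p)
  rw [primeCounting_nth_prime] at this
  push_cast at this
  linarith

theorem eventually_le_mul_mul_log_of_le_mul_log {a b : ℝ} (ha : 0 < a) (hab : a < b) :
    ∀ᶠ t in atTop, ∀ x : ℝ, x ≤ a * t * log x → x ≤ b * t * log t := by
  have hb : 0 < b := ha.trans hab
  have hgap : ∀ᶠ u in atTop, a * log b + a * log u < (b - a) * u := by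
    filter_upwards [isLittleO_log_id_atTop.bound (div_pos (sub_pos.2 hab) (mul_pos two_pos ha)),
      eventually_gt_atTop (2 * a * log b / (b - a)), eventually_gt_atTop 1] with u hlog hu hu1
    rw [div_lt_iff₀ (sub_pos.2 hab)] at hu
    rw [norm_of_nonneg (log_nonneg hu1.le), id, norm_of_nonneg (by linarith)] at hlog
    have : a * log u ≤ (b - a) / 2 * u := by
      calc a * log u ≤ a * ((b - a) / (2 * a) * u) := by gcongr
        _ = (b - a) / 2 * u := by field_simp
    linarith
  have hz : Tendsto (fun t => b * t * log t) atTop atTop :=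
    (tendsto_id.const_mul_atTop hb).atTop_mul_atTop₀ tendsto_log_atTop
  filter_upwards [tendsto_log_atTop.eventually hgap, hz.eventually_ge_atTop (exp 1),
    eventually_gt_atTop 1] with t hgap hz ht x hx
  by_contra! hlt
  set z := b * t * log t
  have hz0 : 0 < z := (exp_pos 1).trans_le hz
  have hx0 : 0 < x := hz0.trans hlt
  have hanti : log x / x ≤ log z / z := log_div_self_antitoneOn hz (hz.trans hlt.le) hlt.le
  have hzle : z ≤ a * t * log z := by
    rw [div_le_div_iff₀ hx0 hz0] at hanti
    refine le_of_mul_le_mul_right ?_ hx0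
    calc z * x ≤ z * (a * t * log x) := by gcongr
      _ = a * t * (log x * z) := by ring
      _ ≤ a * t * (log z * x) := by gcongr
      _ = a * t * log z * x := by ring
  have hlogz : log z = log b + log t + log (log t) := by
    rw [log_mul (by positivity) (log_pos ht).ne', log_mul hb.ne' (by positivity)]
  rw [hlogz] at hzle
  have : b * log t ≤ a * (log b + log t + log (log t)) := by
    have ht0 : 0 < t := by linarith
    nlinarith
  linarith

theorem eventually_log_nth_prime_le :
    ∀ᶠ k : ℕ in atTop,
      log (nth Nat.Prime k) ≤ log 2 + log ((k : ℝ) + 3) + log (log ((k : ℝ) + 3)) := by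
  have hinv := eventually_le_mul_mul_log_of_le_mul_log (a := (log 2)⁻¹) (b := 2)
    (by positivity) (by rw [inv_lt_comm₀ (by positivity) two_pos]; linarith [log_two_gt_d9])
  have hshift : Tendsto (fun k : ℕ => (k : ℝ) + 3) atTop atTop :=
    tendsto_atTop_add_const_right _ 3 tendsto_natCast_atTop_atTop
  filter_upwards [hshift.eventually hinv] with k hk
  set t : ℝ := (k : ℝ) + 3
  have hp : (2 : ℝ) ≤ nth Nat.Prime k := mod_cast (prime_nth_prime k).two_le
  have ht : 1 < t := by simp only [t]; linarith [(Nat.cast_nonneg k : (0 : ℝ) ≤ k)]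
  have hle : (nth Nat.Prime k : ℝ) ≤ 2 * t * log t := by
    refine hk _ ?_
    rw [mul_assoc, inv_mul_eq_div, le_div_iff₀ (by positivity)]
    exact nth_prime_mul_log_two_le k
  calc log (nth Nat.Prime k) ≤ log (2 * t * log t) := log_le_log (by positivity) hle
    _ = log 2 + log t + log (log t) := by
      rw [log_mul (by positivity) (log_pos ht).ne', log_mul two_ne_zero (by positivity)]

theorem exists_sum_range_le_add_sum_range {f g : ℕ → ℝ} (h : ∀ᶠ k in atTop, f k ≤ g k) :
    ∃ B, ∀ n, ∑ k ∈ range n, f k ≤ B + ∑ k ∈ range n, g k := by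
  obtain ⟨k₀, hk₀⟩ := eventually_atTop.1 h
  set e : ℕ → ℝ := fun k => max (f k - g k) 0
  refine ⟨∑ k ∈ range k₀, e k, fun n => ?_⟩
  have he : ∑ k ∈ range n, e k ≤ ∑ k ∈ range k₀, e k := by
    rw [← sum_subset (range_subset_range.2 (min_le_left n k₀)) fun k hk hk' => ?_]
    · exact sum_le_sum_of_subset_of_nonneg (range_subset_range.2 (min_le_right n k₀))
        fun k _ _ => le_max_right _ _
    · have : k₀ ≤ k := by simp only [mem_range] at hk hk'; omega
      exact max_eq_right (sub_nonpos.2 (hk₀ k this))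
  have hfe : ∑ k ∈ range n, f k ≤ ∑ k ∈ range n, (g k + e k) :=
    sum_le_sum fun k _ => by linarith [le_max_left (f k - g k) 0]
  rw [sum_add_distrib] at hfe
  linarith

theorem sum_range_log_add_le {x₀ : ℝ} (hx₀ : 0 < x₀) (n : ℕ) :
    ∑ i ∈ range n, log (x₀ + i) ≤
      (x₀ + n) * log (x₀ + n) - x₀ * log x₀ - (x₀ + n) + x₀ := by
  rw [← integral_log]
  exact (strictMonoOn_log.monotoneOn.mono fun x hx => hx₀.trans_le hx.1).sum_le_integral

theorem exists_theta_nth_prime_le : ∃ B, ∀ K : ℕ,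
    θ (nth Nat.Prime K) ≤ B + (K + 4) * (log (K + 4) + log (log (K + 4)) - (1 - log 2)) := by
  obtain ⟨B, hB⟩ := exists_sum_range_le_add_sum_range eventually_log_nth_prime_le
  refine ⟨B, fun K => ?_⟩
  set s : ℝ := K + 4
  have hs : 4 ≤ s := by simp [s]
  have hlog3 : 1 < log 3 := by
    rw [lt_log_iff_exp_lt three_pos]; linarith [exp_one_lt_d9]
  have hloglog : 0 ≤ log (log s) :=
    log_nonneg ((hlog3.trans_le (log_le_log three_pos (by linarith))).le)
  have hlogs : ∑ k ∈ range (K + 1), log ((k : ℝ) + 3) ≤ s * log s - s := by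
    have := sum_range_log_add_le three_pos (K + 1)
    simp only [add_comm (3 : ℝ)] at this ⊢
    push_cast at this
    have hs' : (K : ℝ) + 1 + 3 = s := by simp [s]; ring
    rw [hs'] at this
    linarith
  have hloglogs : ∑ k ∈ range (K + 1), log (log ((k : ℝ) + 3)) ≤ (K + 1) * log (log s) := by
    calc ∑ k ∈ range (K + 1), log (log ((k : ℝ) + 3))
        ≤ ∑ k ∈ range (K + 1), log (log s) := by
          refine sum_le_sum fun k hk => ?_
          have hk : (k : ℝ) ≤ K := mod_cast Nat.lt_succ_iff.1 (mem_range.1 hk)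
          gcongr
          · exact log_pos (by linarith [(Nat.cast_nonneg k : (0 : ℝ) ≤ k)])
          · simp [s]; linarith
      _ = (K + 1) * log (log s) := by simp
  calc θ (nth Nat.Prime K) = ∑ k ∈ range (K + 1), log (nth Nat.Prime k : ℝ) := by
        rw [theta_eq_sum_primesLE_log, sum_primesLE_nth_prime]
    _ ≤ B + ∑ k ∈ range (K + 1), (log 2 + log ((k : ℝ) + 3) + log (log ((k : ℝ) + 3))) :=
        hB _
    _ ≤ B + (K + 1) * log 2 + (s * log s - s) + (K + 1) * log (log s) := by
      simp only [sum_add_distrib, sum_const, card_range, nsmul_eq_mul]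
      push_cast
      linarith
    _ ≤ B + s * (log s + log (log s) - (1 - log 2)) := by
      have : (K : ℝ) + 1 ≤ s := by simp only [s]; linarith
      nlinarith [log_two_gt_d9]

theorem log_add_log_log_le_of_le_div_log_add {y c s : ℝ} (hy : 1 < y) (hs : 1 < s) (hsy : s ≤ y)
    (hsL : s ≤ y / log y + c) : log s + log (log s) ≤ log y + c / (y / log y) := by
  set L := y / log y
  have hL : 0 < L := div_pos (by linarith) (log_pos hy)
  have hlogs : log s ≤ log L + c / L :=
    calc log s ≤ log (L + c) := log_le_log (by linarith) hsL
      _ = log L + log ((L + c) / L) := by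
        rw [← log_mul hL.ne' (div_pos (by linarith) hL).ne', mul_div_cancel₀ _ hL.ne']
      _ ≤ log L + ((L + c) / L - 1) := by
        gcongr; exact log_le_sub_one_of_pos (div_pos (by linarith) hL)
      _ = log L + c / L := by field_simp; ring
  have hloglogs : log (log s) ≤ log (log y) :=
    log_le_log (log_pos hs) (log_le_log (by linarith) hsy)
  have hlogL : log L = log y - log (log y) := log_div (by linarith) (log_pos hy).ne'
  linarith

theorem eventually_add_mul_log_le_mul_div_log (B c : ℝ) {δ : ℝ} (hδ : 0 < δ) :
    ∀ᶠ y in atTop, B + c * log y ≤ δ * (y / log y) := by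
  set A := |B| + |c| + 1
  have hA : 0 < A := by positivity
  filter_upwards [(isLittleO_pow_log_id_atTop (n := 2)).bound (div_pos hδ hA),
    tendsto_log_atTop.eventually_ge_atTop 1, eventually_gt_atTop 0] with y hsq hlog hy
  rw [norm_of_nonneg (by positivity), id, norm_of_nonneg hy.le, div_mul_eq_mul_div,
    le_div_iff₀ hA] at hsq
  have hAlog : A * log y ≤ δ * (y / log y) := by
    rw [mul_div_assoc', le_div_iff₀ (by linarith)]
    linarith
  have hB : |B| ≤ |B| * log y := le_mul_of_one_le_right (abs_nonneg B) hlog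
  have hc : c * log y ≤ |c| * log y := by gcongr; exact le_abs_self c
  have hAdef : A * log y = |B| * log y + |c| * log y + log y := by simp only [A]; ring
  linarith [le_abs_self B]

theorem eventually_add_mul_log_add_log_log_le (B : ℝ) {c δ : ℝ} (hc : 0 ≤ c) (hδ : 0 < δ) :
    ∀ᶠ y in atTop, ∀ s, 1 < s → s ≤ y / log y + c →
      B + s * (log s + log (log s) - δ) ≤ y := by
  filter_upwards [eventually_add_mul_log_le_mul_div_log (B + c + c ^ 2) c hδ,
    tendsto_log_atTop.eventually_ge_atTop 2, tendsto_log_atTop.eventually_ge_atTop δ,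
    eventually_gt_atTop 1, eventually_ge_atTop (2 * c)] with y hgain hlog2 hlogδ hy hyc s hs hsL
  have hlogy : 0 < log y := log_pos hy
  set L := y / log y
  have hLlog : L * log y = y := div_mul_cancel₀ _ hlogy.ne'
  have hL1 : 1 ≤ L := by
    rw [le_div_iff₀ hlogy]; linarith [log_le_sub_one_of_pos (show 0 < y by linarith)]
  have hLy : L ≤ y / 2 := div_le_div_of_nonneg_left (by linarith) two_pos hlog2
  have hM := log_add_log_log_le_of_le_div_log_add hy hs (by linarith) hsL
  have hMnn : 0 ≤ log y + c / L - δ := by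
    linarith [div_nonneg hc (by linarith : (0 : ℝ) ≤ L)]
  have hcL : c * (c / L) ≤ c ^ 2 := by
    rw [sq]; exact mul_le_mul_of_nonneg_left (div_le_self hc hL1) hc
  calc B + s * (log s + log (log s) - δ) ≤ B + s * (log y + c / L - δ) := by gcongr
    _ ≤ B + (L + c) * (log y + c / L - δ) := by gcongr
    _ = B + L * log y + c + c * log y + c * (c / L) - δ * L - δ * c := by field_simp; ring
    _ ≤ y := by linarith [mul_nonneg hδ.le hc]

/-- For every sufficiently large `x` there is a real `m ≥ 2` with
`π(m) ≥ (log x)/(log log x) + 2` and `θ(m) ≤ log x`. -/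
theorem exists_chebyshev_choice :
    ∀ᶠ x : ℝ in Filter.atTop, ∃ m : ℝ, 2 ≤ m ∧
      Real.log x / Real.log (Real.log x) + 2 ≤
        (((Finset.range (⌊m⌋₊ + 1)).filter Nat.Prime).card : ℝ) ∧
      (∑ p ∈ (Finset.range (⌊m⌋₊ + 1)).filter Nat.Prime, Real.log p) ≤ Real.log x := by
  obtain ⟨B, hB⟩ := exists_theta_nth_prime_le
  have hδ : 0 < 1 - log 2 := by linarith [log_two_lt_d9]
  filter_upwards [tendsto_log_atTop.eventually (eventually_add_mul_log_add_log_log_le B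
    (c := 6) (by norm_num) hδ), tendsto_log_atTop.eventually_ge_atTop 1] with x hθ hx
  set L := log x / log (log x)
  have hL : 0 ≤ L := div_nonneg (by linarith) (log_nonneg hx)
  set K := ⌈L⌉₊ + 1
  have hKL : L + 1 ≤ K := by simp only [K]; push_cast; linarith [Nat.le_ceil L]
  have hKU : (K : ℝ) ≤ L + 2 := by simp only [K]; push_cast; linarith [Nat.ceil_lt_add_one hL]
  refine ⟨nth Nat.Prime K, mod_cast (prime_nth_prime K).two_le, ?_, ?_⟩
  · rw [Nat.floor_natCast, ← Nat.primesLE_eq_filter_range, Nat.primesLE_card_eq_primeCounting,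
      primeCounting_nth_prime]
    push_cast
    linarith
  · rw [← Nat.primesLE_eq_filter_range, ← theta_eq_sum_primesLE]
    exact (hB K).trans (hθ _ (by linarith) (by linarith))
end

section
/- Let R(x) = e^{e^x} and define R_∞(x) = inf_{ε>0} x^ε R(1/ε). Then for all sufficiently large x, R_∞(x) ≤ exp( (log x)/(log log x − 2 log log log x) + (log x)/(log log x)² ); in particular R_∞(x) ≤ exp( 2 (log x)/(log log x) ) for all sufficiently large x. -/
/-- `F_∞(x) = inf_{ε>0} x^ε F(1/ε)`. -/
noncomputable def Finfty (F : ℝ → ℝ) (x : ℝ) : ℝ :=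
  sInf {y : ℝ | ∃ ε : ℝ, 0 < ε ∧ y = x ^ ε * F (1 / ε)}

lemma Finfty_le (F : ℝ → ℝ) (hF : ∀ t, 0 ≤ F t) {x : ℝ} (hx : 0 ≤ x)
    {ε : ℝ} (hε : 0 < ε) : Finfty F x ≤ x ^ ε * F (1 / ε) := by
  apply csInf_le
  · exact ⟨0, fun y ⟨e, _, hy⟩ => hy ▸ mul_nonneg (Real.rpow_nonneg hx e) (hF _)⟩
  · exact ⟨ε, hε, rfl⟩

/-- For `R(x) = e^{eˣ}`, for all sufficiently large `x` one has
`R_∞(x) ≤ exp((log x)/(log log x − 2·log log log x) + (log x)/(log log x)²)`,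
and in particular `R_∞(x) ≤ exp(2·(log x)/(log log x))`. -/
theorem Rinfty_upper_bound :
    ∀ᶠ x : ℝ in Filter.atTop,
      Finfty (fun t => Real.exp (Real.exp t)) x ≤
        Real.exp (Real.log x /
            (Real.log (Real.log x) - 2 * Real.log (Real.log (Real.log x))) +
          Real.log x / Real.log (Real.log x) ^ 2) ∧
      Finfty (fun t => Real.exp (Real.exp t)) x ≤
        Real.exp (2 * Real.log x / Real.log (Real.log x)) := by
  have hlog2 : Filter.Tendsto (fun x : ℝ => Real.log (Real.log x)) Filter.atTop Filter.atTop :=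
    Real.tendsto_log_atTop.comp Real.tendsto_log_atTop
  have hio : ∀ᶠ u : ℝ in Filter.atTop, Real.log u ≤ u / 8 := by
    have h := Real.isLittleO_log_id_atTop.def (by norm_num : (0:ℝ) < 1/8)
    filter_upwards [h, Filter.eventually_ge_atTop (0:ℝ)] with u hu hu0
    have h1 : Real.log u ≤ |Real.log u| := le_abs_self _
    simp only [Real.norm_eq_abs, id] at hu
    rw [abs_of_nonneg hu0] at hu
    linarith
  filter_upwards [hlog2.eventually hio, hlog2.eventually_ge_atTop 2,
    Filter.eventually_ge_atTop (Real.exp 1)] with x hvu hu2 hx1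
  set L := Real.log x with hLdef
  set u := Real.log L with hudef
  set v := Real.log u with hvdef
  have hx0 : (0:ℝ) < x := lt_of_lt_of_le (Real.exp_pos 1) hx1
  have hL1 : 1 ≤ L := (Real.le_log_iff_exp_le hx0).mpr hx1
  have hL0 : 0 < L := lt_of_lt_of_le one_pos hL1
  have hu0 : 0 < u := lt_of_lt_of_le two_pos hu2
  have hv0 : 0 ≤ v := Real.log_nonneg (by linarith)
  have h4u : 4 * v + 1 ≤ u := by linarith
  have huv : 0 < u - 2 * v := by linarith
  have expu : Real.exp u = L := Real.exp_log hL0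
  have expv : Real.exp v = u := Real.exp_log hu0
  set ε : ℝ := 1 / (u - 2 * v) with hεdef
  have hε : 0 < ε := by positivity
  have hkey : x ^ ε * Real.exp (Real.exp (1 / ε)) =
      Real.exp (L / (u - 2 * v) + L / u ^ 2) := by
    have h1ε : 1 / ε = u - 2 * v := by rw [hεdef, one_div_one_div]
    have hexp : Real.exp (1 / ε) = L / u ^ 2 := by
      rw [h1ε, Real.exp_sub, expu, two_mul, Real.exp_add, expv]
      ring
    rw [Real.rpow_def_of_pos hx0, hexp, ← Real.exp_add]
    congr 1
    rw [hεdef]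
    ring
  have hF : ∀ t : ℝ, 0 ≤ Real.exp (Real.exp t) := fun t => (Real.exp_pos _).le
  have hbound := Finfty_le (fun t => Real.exp (Real.exp t)) hF hx0.le hε
  rw [hkey] at hbound
  refine ⟨hbound, hbound.trans (Real.exp_le_exp.mpr ?_)⟩
  rw [div_add_div _ _ (ne_of_gt huv) (by positivity), div_le_div_iff₀ (by positivity) hu0]
  nlinarith [mul_nonneg (mul_nonneg hL0.le hu0.le)
      (mul_nonneg hu0.le (by linarith : (0:ℝ) ≤ u - 4*v - 1)),
    mul_nonneg (mul_nonneg hL0.le hv0) hu0.le, mul_pos hL0 hu0, hv0,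
    mul_nonneg hL0.le hv0]
end

section
/- Let G(z) = exp((log z)·(log log z)) for z ≥ e. For each sufficiently large real k, let x_k be the unique solution of G'(x_k) = k (G is differentiable and convex for large arguments, so x_k exists and is unique for large k). Then log x_k = (log k)/(log log k) + O( (log k)/(log log k)^{3/2} ) as k → ∞. -/
/-!
Put `u = log x`. Then `G' x = exp (g u)` with `g u = u (log u - 1) + log (log u + 1)`
(`derivExponent`), which is continuous and strictly increasing for `u ≥ e`, so `G' x = k` amounts
to `g u = M := log k`.
With `T = log M`, `a = M / T` and `d = M / T ^ (3/2) = a / √T`, one has `log a = T - log T`, hence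
`g (a + d) ≥ (a + d) (T - log T - 1) ≥ M + a (√T - 2 (log T + 1)) ≥ M` and
`g (a - d) ≤ (a - d) T + T = M - (d - 1) T ≤ M` for large `M`. Monotonicity traps every root in
`[a - d, a + d]`, and the intermediate value theorem produces one.
-/

open Real Set Filter Asymptotics

noncomputable def derivExponent (u : ℝ) : ℝ := u * (log u - 1) + log (log u + 1)

lemma one_le_log_of_exp_one_le {x : ℝ} (hx : exp 1 ≤ x) : 1 ≤ log x := by
  rwa [le_log_iff_exp_le ((exp_pos 1).trans_le hx)]

theorem StrictMonoOn.existsUnique_apply_eq {α β : Type*} [ConditionallyCompleteLinearOrder α]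
    [TopologicalSpace α] [OrderTopology α] [DenselyOrdered α] [LinearOrder β] [TopologicalSpace β]
    [OrderClosedTopology β] {f : α → β} {s : Set α} {a b : α} {y : β}
    (hf : StrictMonoOn f s) (hfc : ContinuousOn f s) (hs : s.OrdConnected) (ha : a ∈ s)
    (hb : b ∈ s) (hy : y ∈ Icc (f a) (f b)) : ∃! x, x ∈ s ∧ f x = y := by
  have hab : a ≤ b := (hf.le_iff_le ha hb).1 (hy.1.trans hy.2)
  obtain ⟨x, hx, rfl⟩ := intermediate_value_Icc hab (hfc.mono (hs.out ha hb)) hy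
  exact ⟨x, ⟨hs.out ha hb hx, rfl⟩, fun z hz => hf.injOn hz.1 (hs.out ha hb hx) hz.2⟩

theorem hasDerivAt_exp_log_mul_log_log {x : ℝ} (hx : exp 1 ≤ x) :
    HasDerivAt (fun z => exp (log z * log (log z))) (exp (derivExponent (log x))) x := by
  have hx0 : 0 < x := (exp_pos 1).trans_le hx
  have hL : 1 ≤ log x := one_le_log_of_exp_one_le hx
  have h : HasDerivAt (fun z => exp (log z * log (log z)))
      (exp (log x * log (log x)) * (x⁻¹ * log (log x) + log x * ((log x)⁻¹ * x⁻¹))) x :=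
    ((hasDerivAt_log hx0.ne').mul
      ((hasDerivAt_log (by linarith : log x ≠ 0)).comp x (hasDerivAt_log hx0.ne'))).exp
  convert h using 1
  have hLL : 0 < log (log x) + 1 := by linarith [log_nonneg hL]
  rw [derivExponent, exp_add, exp_log hLL, mul_sub, mul_one, exp_sub, exp_log hx0]
  field_simp

theorem deriv_eq_exp_derivExponent_log {G : ℝ → ℝ}
    (hG : ∀ z : ℝ, exp 1 ≤ z → G z = exp (log z * log (log z))) {x : ℝ} (hx : exp 1 < x) :
    deriv G x = exp (derivExponent (log x)) := by
  have hGF : G =ᶠ[nhds x] fun z => exp (log z * log (log z)) :=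
    eventually_of_mem (isOpen_Ioi.mem_nhds hx) fun z hz => hG z (le_of_lt hz)
  rw [hGF.deriv_eq, (hasDerivAt_exp_log_mul_log_log hx.le).deriv]

theorem strictMonoOn_derivExponent : StrictMonoOn derivExponent (Ici (exp 1)) := by
  intro u hu v hv huv
  have hu1 := one_le_log_of_exp_one_le hu
  have hlog : log u < log v := log_lt_log ((exp_pos 1).trans_le hu) huv
  have h1 : u * (log u - 1) ≤ v * (log v - 1) :=
    mul_le_mul huv.le (by linarith) (by linarith) (by linarith [exp_pos 1, hv.out])
  have h2 : log (log u + 1) < log (log v + 1) := log_lt_log (by linarith) (by linarith)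
  unfold derivExponent
  linarith

theorem continuousOn_derivExponent : ContinuousOn derivExponent (Ici (exp 1)) := by
  have h0 : ∀ u ∈ Ici (exp 1), u ≠ 0 := fun u hu => ((exp_pos 1).trans_le hu).ne'
  have h1 : ∀ u ∈ Ici (exp 1), log u + 1 ≠ 0 := fun u hu => by
    linarith [one_le_log_of_exp_one_le hu]
  unfold derivExponent
  fun_prop (disch := assumption)

lemma mapsTo_log_Ici_exp : MapsTo log (Ici (exp (exp 1))) (Ici (exp 1)) := fun _ hx =>
  (le_log_iff_exp_le ((exp_pos _).trans_le hx)).2 hx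

theorem strictMonoOn_exp_derivExponent_log :
    StrictMonoOn (fun x => exp (derivExponent (log x))) (Ici (exp (exp 1))) :=
  exp_strictMono.comp_strictMonoOn <| strictMonoOn_derivExponent.comp
    (strictMonoOn_log.mono fun _ hx => (exp_pos _).trans_le hx) mapsTo_log_Ici_exp

theorem continuousOn_exp_derivExponent_log :
    ContinuousOn (fun x => exp (derivExponent (log x))) (Ici (exp (exp 1))) :=
  continuous_exp.comp_continuousOn <| continuousOn_derivExponent.comp
    (continuousOn_log.mono fun _ hx => ((exp_pos _).trans_le hx).ne') mapsTo_log_Ici_exp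

lemma rpow_three_div_two_eq_mul_sqrt {x : ℝ} (hx : 0 ≤ x) : x ^ ((3 : ℝ) / 2) = x * √x := by
  rw [show (3 : ℝ) / 2 = 1 + 1 / 2 by norm_num, rpow_add' hx (by norm_num), rpow_one,
    sqrt_eq_rpow]

theorem le_derivExponent_add {M : ℝ} (hM : exp 1 ≤ M)
    (hlog : 2 * (log (log M) + 1) ≤ √(log M)) :
    M ≤ derivExponent (M / log M + M / log M ^ ((3 : ℝ) / 2)) := by
  set T := log M
  have hT : 1 ≤ T := one_le_log_of_exp_one_le hM
  have hM0 : 0 < M := (exp_pos 1).trans_le hM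
  have hlogT : 0 ≤ log T := log_nonneg hT
  have hlogT' : log T ≤ T - 1 := log_le_sub_one_of_pos (by linarith)
  set a := M / T with ha
  set d := M / T ^ ((3 : ℝ) / 2) with hd
  have hS : 2 ≤ √T := by linarith
  have haT : a * T = M := by rw [ha]; field_simp
  have hdS : d * √T = a := by
    rw [hd, ha, rpow_three_div_two_eq_mul_sqrt (by linarith)]
    field_simp
  have hdT : d * T = a * √T := by
    rw [← hdS, mul_assoc, mul_self_sqrt (by linarith)]
  have ha0 : 0 < a := by positivity
  have hd0 : 0 ≤ d := by positivity
  have hda : d ≤ a := by nlinarith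
  have hloga : log a = T - log T := by rw [ha, log_div hM0.ne' (by linarith)]
  have hlogad : log a ≤ log (a + d) := log_le_log ha0 (by linarith)
  have hlin : (a + d) * (T - log T - 1) ≤ (a + d) * (log (a + d) - 1) :=
    mul_le_mul_of_nonneg_left (by linarith) (by linarith)
  have hloglog : 0 ≤ log (log (a + d) + 1) := log_nonneg (by linarith)
  have hcorr : (a + d) * (log T + 1) ≤ a * √T := by nlinarith
  unfold derivExponent
  nlinarith

theorem derivExponent_sub_le {M : ℝ} (hM : exp 1 ≤ M) (hd : 1 ≤ M / log M ^ ((3 : ℝ) / 2))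
    (hpos : 1 ≤ M / log M - M / log M ^ ((3 : ℝ) / 2)) :
    derivExponent (M / log M - M / log M ^ ((3 : ℝ) / 2)) ≤ M := by
  set T := log M
  have hT : 1 ≤ T := one_le_log_of_exp_one_le hM
  have hM0 : 0 < M := (exp_pos 1).trans_le hM
  set a := M / T with ha
  set d := M / T ^ ((3 : ℝ) / 2)
  set b := a - d
  have haT : a * T = M := by rw [ha]; field_simp
  have hlogb : log b ≤ T := by
    calc log b ≤ log a := log_le_log (by linarith) (by linarith)
      _ = T - log T := by rw [ha, log_div hM0.ne' (by linarith)]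
      _ ≤ T := by linarith [log_nonneg hT]
  have hlogb0 : 0 ≤ log b := log_nonneg hpos
  have hlin : b * (log b - 1) ≤ b * T := mul_le_mul_of_nonneg_left (by linarith) (by linarith)
  have hloglog : log (log b + 1) ≤ T := by
    linarith [log_le_sub_one_of_pos (by linarith : 0 < log b + 1)]
  unfold derivExponent
  nlinarith

theorem eventually_mul_log_add_one_le_sqrt (c : ℝ) : ∀ᶠ T in atTop, c * (log T + 1) ≤ √T := by
  have hlog := isLittleO_log_rpow_atTop (by norm_num : (0 : ℝ) < 1 / 2)
  have hone : (fun _ => (1 : ℝ)) =o[atTop] fun T : ℝ => T ^ (1 / 2 : ℝ) :=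
    (isLittleO_one_left_iff ℝ).2 <|
      tendsto_norm_atTop_atTop.comp (tendsto_rpow_atTop (by norm_num))
  filter_upwards [((hlog.add hone).const_mul_left c).bound one_pos, eventually_ge_atTop 0]
    with T hT hT0
  rw [one_mul, norm_eq_abs, norm_of_nonneg (rpow_nonneg hT0 _), ← sqrt_eq_rpow] at hT
  exact (le_abs_self _).trans hT

theorem tendsto_div_log_rpow_atTop (r : ℝ) : Tendsto (fun x => x / log x ^ r) atTop atTop :=
  ((tendsto_exp_div_rpow_atTop r).comp tendsto_log_atTop).congr'
    (by filter_upwards [eventually_gt_atTop 0] with x hx using by simp [exp_log hx])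

theorem eventually_derivExponent_bracket : ∀ᶠ M in atTop,
    0 < M / log M ^ ((3 : ℝ) / 2) ∧ exp 1 ≤ M / log M - M / log M ^ ((3 : ℝ) / 2) ∧
    derivExponent (M / log M - M / log M ^ ((3 : ℝ) / 2)) ≤ M ∧
    M ≤ derivExponent (M / log M + M / log M ^ ((3 : ℝ) / 2)) := by
  filter_upwards [eventually_ge_atTop (exp 1),
    tendsto_log_atTop.eventually (eventually_mul_log_add_one_le_sqrt 2),
    (tendsto_div_log_rpow_atTop ((3 : ℝ) / 2)).eventually_ge_atTop (exp 1)] with M hM hlog hd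
  have hT := one_le_log_of_exp_one_le hM
  have hS : 2 ≤ √(log M) := by linarith [log_nonneg hT]
  have hdS : M / log M ^ ((3 : ℝ) / 2) * √(log M) = M / log M := by
    rw [rpow_three_div_two_eq_mul_sqrt (by linarith)]
    field_simp
  have hsub : exp 1 ≤ M / log M - M / log M ^ ((3 : ℝ) / 2) := by
    rw [← hdS]
    nlinarith [mul_le_mul_of_nonneg_left hS ((exp_pos 1).le.trans hd)]
  have he := add_one_le_exp 1
  exact ⟨(exp_pos 1).trans_le hd, hsub, derivExponent_sub_le hM (by linarith) (by linarith),
    le_derivExponent_add hM hlog⟩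

/-- Let `G(z) = exp((log z)·(log log z))` for `z ≥ e`. For large `k` the equation
`G'(x_k) = k` has a unique solution among large arguments, and
`log x_k = (log k)/(log log k) + O((log k)/(log log k)^{3/2})`. -/
theorem critical_point_asymptotics_loglog (G : ℝ → ℝ)
    (hG_eq : ∀ z : ℝ, Real.exp 1 ≤ z →
      G z = Real.exp (Real.log z * Real.log (Real.log z))) :
    ∃ X₀ : ℝ, Real.exp 1 < X₀ ∧ ∃ K C : ℝ, 0 < C ∧ ∀ k : ℝ, K ≤ k →
      (∃! x : ℝ, X₀ ≤ x ∧ deriv G x = k) ∧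
      ∀ x : ℝ, X₀ ≤ x → deriv G x = k →
        |Real.log x - Real.log k / Real.log (Real.log k)| ≤
          C * Real.log k / Real.log (Real.log k) ^ ((3 : ℝ) / 2) := by
  have hX₀ : exp 1 < exp (exp 1) := exp_lt_exp.2 (one_lt_exp_iff.2 one_pos)
  have hderiv : EqOn (deriv G) (fun x => exp (derivExponent (log x))) (Ici (exp (exp 1))) :=
    fun x hx => deriv_eq_exp_derivExponent_log hG_eq (hX₀.trans_le hx)
  have hmono := strictMonoOn_exp_derivExponent_log.congr hderiv.symm
  have hexp : ∀ u, exp 1 ≤ u →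
      exp u ∈ Ici (exp (exp 1)) ∧ deriv G (exp u) = exp (derivExponent u) :=
    fun u hu => ⟨exp_le_exp.2 hu, by rw [hderiv (exp_le_exp.2 hu)]; simp only [log_exp]⟩
  obtain ⟨K, hK⟩ := eventually_atTop.1 <|
    (tendsto_log_atTop.eventually eventually_derivExponent_bracket).and (eventually_gt_atTop 0)
  refine ⟨exp (exp 1), hX₀, K, 1, one_pos, fun k hk => ?_⟩
  obtain ⟨⟨hd, hsub, hlow, hupp⟩, hk0⟩ := hK k hk
  set a := log k / log (log k)
  set d := log k / log (log k) ^ ((3 : ℝ) / 2)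
  obtain ⟨hmem_lo, hG_lo⟩ := hexp (a - d) hsub
  obtain ⟨hmem_hi, hG_hi⟩ := hexp (a + d) (by linarith)
  have hlo : deriv G (exp (a - d)) ≤ k := hG_lo ▸ (exp_le_exp.2 hlow).trans_eq (exp_log hk0)
  have hhi : k ≤ deriv G (exp (a + d)) := hG_hi ▸ (exp_log hk0).symm.trans_le (exp_le_exp.2 hupp)
  refine ⟨hmono.existsUnique_apply_eq (continuousOn_exp_derivExponent_log.congr hderiv)
    ordConnected_Ici hmem_lo hmem_hi ⟨hlo, hhi⟩, fun x hx hxk => ?_⟩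
  have hx0 : 0 < x := (exp_pos _).trans_le hx
  have hx_lo := (le_log_iff_exp_le hx0).2 ((hmono.le_iff_le hmem_lo hx).1 (hxk ▸ hlo))
  have hx_hi := (log_le_iff_le_exp hx0).2 ((hmono.le_iff_le hx hmem_hi).1 (hxk ▸ hhi))
  rw [one_mul, abs_sub_le_iff]
  constructor <;> linarith
end
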